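/- arXiv:2209.14211 — 8 statements merged into one kernel-verified Lean document; each statement's English description precedes it below -/
import Mathlib

section
/- Let R be a G-graded commutative ring, I a graded ideal, Λ_I the set of all graded maximal ideals of R containing I, and Q a homogeneous prime ideal such that Q ∩ h(R) ⊆ ⋃_{M ∈ Λ_I} M. Then Q ⊆ M for some M ∈ Λ_I. -/
/-! If `I + Q` were the whole ring, comparing the degree-`0` components in `1 = a + b` with
`a ∈ I`, `b ∈ Q` would give a homogeneous `b₀ ∈ Q` with `1 - b₀ ∈ I`. A graded maximal ideal
containing `I` and `b₀` would then contain `1`. So `I + Q` is a proper graded ideal, and Zorn's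
lemma puts it inside a graded maximal ideal. -/

section GradedGelfand

variable {G : Type*} [AddGroup G] [DecidableEq G] {R : Type*} [CommRing R]
variable (𝒜 : G → AddSubgroup R) [GradedRing 𝒜]

/-- A homogeneous (graded) prime ideal: a proper graded ideal that is prime
with respect to homogeneous elements. -/
def IsGradedPrime (P : Ideal R) : Prop :=
  P.IsHomogeneous 𝒜 ∧ P ≠ ⊤ ∧
    ∀ a b : R, SetLike.IsHomogeneousElem 𝒜 a → SetLike.IsHomogeneousElem 𝒜 b →
      a * b ∈ P → a ∈ P ∨ b ∈ P

/-- A graded maximal ideal: a proper graded ideal maximal among proper graded ideals. -/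
def IsGradedMaximal (M : Ideal R) : Prop :=
  M.IsHomogeneous 𝒜 ∧ M ≠ ⊤ ∧
    ∀ J : Ideal R, J.IsHomogeneous 𝒜 → M ≤ J → J ≠ ⊤ → J = M

/-- The homogeneous prime spectrum of a graded ring. -/
def GSpec := { P : Ideal R // IsGradedPrime 𝒜 P }

/-- The Zariski topology on the homogeneous prime spectrum, generated by the basic
open sets `D_G(r)` for homogeneous `r`; the closed sets are exactly the `V_G(I)`
for graded ideals `I`. -/
instance : TopologicalSpace (GSpec 𝒜) :=
  TopologicalSpace.generateFrom
    { U | ∃ r : R, SetLike.IsHomogeneousElem 𝒜 r ∧ U = { P : GSpec 𝒜 | r ∉ P.1 } }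

/-- The set of graded maximal ideals inside the homogeneous prime spectrum. -/
def GMax : Set (GSpec 𝒜) := { P | IsGradedMaximal 𝒜 P.1 }

/-- A Gelfand graded ring: every homogeneous prime ideal is contained in a unique
graded maximal ideal. -/
def IsGelfandGraded : Prop :=
  ∀ P : Ideal R, IsGradedPrime 𝒜 P →
    ∃! M : Ideal R, IsGradedMaximal 𝒜 M ∧ P ≤ M

/-- A pm⁺ graded ring: for every homogeneous prime `P`, the homogeneous primes
containing `P` form a chain. -/
def IsPMPlusGraded : Prop :=
  ∀ P Q Q' : Ideal R, IsGradedPrime 𝒜 P → IsGradedPrime 𝒜 Q → IsGradedPrime 𝒜 Q' →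
    P ≤ Q → P ≤ Q' → Q ≤ Q' ∨ Q' ≤ Q

end GradedGelfand

theorem Ideal.IsHomogeneous.exists_add_eq_one_of_sup_eq_top {ι σ R : Type*} [AddMonoid ι]
    [DecidableEq ι] [Semiring R] [SetLike σ R] [AddSubmonoidClass σ R] (𝒜 : ι → σ)
    [GradedRing 𝒜] {I J : Ideal R} (hI : I.IsHomogeneous 𝒜) (hJ : J.IsHomogeneous 𝒜)
    (h : I ⊔ J = ⊤) :
    ∃ a ∈ I, ∃ b ∈ J, SetLike.IsHomogeneousElem 𝒜 b ∧ a + b = 1 := by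
  obtain ⟨a, ha, b, hb, hab⟩ := Submodule.mem_sup.1 (h ▸ Submodule.mem_top : (1 : R) ∈ I ⊔ J)
  refine ⟨_, hI 0 ha, _, hJ 0 hb, ⟨0, SetLike.coe_mem _⟩, ?_⟩
  calc (DirectSum.decompose 𝒜 a 0 : R) + DirectSum.decompose 𝒜 b 0
      = DirectSum.decompose 𝒜 (a + b) 0 := by simp [DirectSum.decompose_add]
    _ = 1 := by rw [hab, DirectSum.decompose_of_mem_same 𝒜 SetLike.GradedOne.one_mem]

theorem Ideal.IsHomogeneous.exists_le_isGradedMaximal {G R : Type*} [AddGroup G]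
    [DecidableEq G] [CommRing R] (𝒜 : G → AddSubgroup R) [GradedRing 𝒜] {J : Ideal R}
    (hJ : J.IsHomogeneous 𝒜) (hJ_ne_top : J ≠ ⊤) :
    ∃ M : Ideal R, IsGradedMaximal 𝒜 M ∧ J ≤ M := by
  let S : Set (Ideal R) := {K | K.IsHomogeneous 𝒜 ∧ K ≠ ⊤}
  have chain_bdd : ∀ c ⊆ S, IsChain (· ≤ ·) c → ∀ K ∈ c, ∃ ub ∈ S, ∀ z ∈ c, z ≤ ub := by
    intro c hcS hc K hK
    refine ⟨SupSet.sSup c, ⟨.sSup fun L hL ↦ (hcS hL).1, fun htop ↦ ?_⟩,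
      fun _ ↦ le_sSup⟩
    obtain ⟨L, hLc, h1L⟩ := (Submodule.mem_sSup_of_directed ⟨K, hK⟩ hc.directedOn).1
      (htop ▸ Submodule.mem_top : (1 : R) ∈ SupSet.sSup c)
    exact (hcS hLc).2 ((Ideal.eq_top_iff_one L).2 h1L)
  obtain ⟨M, hJM, hM⟩ := zorn_le_nonempty₀ S chain_bdd J ⟨hJ, hJ_ne_top⟩
  exact ⟨M, ⟨hM.prop.1, hM.prop.2, fun K hK hMK hK_ne_top ↦
    le_antisymm (hM.le_of_ge ⟨hK, hK_ne_top⟩ hMK) hMK⟩, hJM⟩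

section Statements

variable {G : Type*} [AddGroup G] [DecidableEq G] {R : Type*} [CommRing R]
variable (𝒜 : G → AddSubgroup R) [GradedRing 𝒜]

theorem stmt_1 (I : Ideal R) (hI : I.IsHomogeneous 𝒜)
    (Q : Ideal R) (hQ : IsGradedPrime 𝒜 Q)
    (h : ∀ r : R, SetLike.IsHomogeneousElem 𝒜 r → r ∈ Q →
      ∃ M : Ideal R, IsGradedMaximal 𝒜 M ∧ I ≤ M ∧ r ∈ M) :
    ∃ M : Ideal R, IsGradedMaximal 𝒜 M ∧ I ≤ M ∧ Q ≤ M := by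
  have hIQ : I ⊔ Q ≠ ⊤ := by
    intro htop
    obtain ⟨a, haI, b, hbQ, hb, hab⟩ := hI.exists_add_eq_one_of_sup_eq_top 𝒜 hQ.1 htop
    obtain ⟨M, hM, hIM, hbM⟩ := h b hb hbQ
    exact hM.2.1 ((Ideal.eq_top_iff_one M).2 (hab ▸ M.add_mem (hIM haI) hbM))
  obtain ⟨M, hM, hle⟩ := (hI.sup hQ.1).exists_le_isGradedMaximal 𝒜 hIQ
  exact ⟨M, hM, le_sup_left.trans hle, le_sup_right.trans hle⟩
end Statements
end

section
/- A G-graded commutative ring R is a Gelfand graded ring (every homogeneous prime ideal is contained in a unique graded maximal ideal) if and only if GMax(R) is a retract of GSpec(R) with respect to the Zariski topology, i.e., there exists a continuous map φ: GSpec(R) → GMax(R) fixing every graded maximal ideal. -/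
/-! Points of `GSpec` specialize exactly along inclusion. Hence a continuous retraction `φ` maps
every graded maximal `N ⊇ P` to a specialization of `φ P`, which forces `N = φ P`.

Conversely, in a Gelfand graded ring the map sending `P` to the graded maximal ideal above it is
continuous (De Marco–Orsatti). If the homogeneous `r` is not in that ideal `M`, write `a + b = 1`
with `a ∈ M`, `b ∈ (r)` of degree `0`. The Gelfand property gives `(1 + u a)(1 + s b) = 0` with
`u, s` of degree `0`; otherwise a graded prime avoiding all such products would lie in two different
graded maximal ideals, one containing `a` and one containing `b`. The basic open set
`D(1 + u a)` then contains `M`, and every point of it lies under a graded maximal ideal avoiding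
`r`. -/

section GelfandRetraction

open DirectSum

variable {G : Type*} [AddGroup G] [DecidableEq G] {R : Type*} [CommRing R]
variable {𝒜 : G → AddSubgroup R} [GradedRing 𝒜]

theorem Ideal.eq_top_of_one_add_mul_mem {I : Ideal R} {x y : R} (hy : y ∈ I)
    (h : 1 + x * y ∈ I) : I = ⊤ :=
  (Ideal.eq_top_iff_one I).mpr ((I.add_mem_iff_left (I.mul_mem_left x hy)).mp h)

theorem Ideal.disjoint_bot_iff_ne_top {I : Ideal R} :
    Disjoint (I : Set R) (⊥ : Submonoid R) ↔ I ≠ ⊤ := by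
  rw [Submonoid.coe_bot, Set.disjoint_singleton_right, Ideal.ne_top_iff_one]
  rfl

theorem one_add_mul_mem_degree_zero {x y : R} (hx : x ∈ 𝒜 0) (hy : y ∈ 𝒜 0) :
    1 + x * y ∈ 𝒜 0 :=
  (SetLike.GradeZero.subring 𝒜).add_mem (SetLike.GradeZero.subring 𝒜).one_mem
    ((SetLike.GradeZero.subring 𝒜).mul_mem hx hy)

theorem Ideal.IsHomogeneous.sup_span_singleton {I : Ideal R} (hI : I.IsHomogeneous 𝒜) {z : R}
    (hz : SetLike.IsHomogeneousElem 𝒜 z) : (I ⊔ Ideal.span {z}).IsHomogeneous 𝒜 :=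
  hI.sup (Ideal.homogeneous_span 𝒜 {z} (by rintro w rfl; exact hz))

theorem exists_degree_zero_add_eq_one {I J : Ideal R} (hI : I.IsHomogeneous 𝒜)
    (hJ : J.IsHomogeneous 𝒜) (h : I ⊔ J = ⊤) :
    ∃ a ∈ I, ∃ b ∈ J, a ∈ 𝒜 0 ∧ b ∈ 𝒜 0 ∧ a + b = 1 := by
  obtain ⟨x, hx, y, hy, hxy⟩ := Submodule.mem_sup.mp (h ▸ Submodule.mem_top : (1 : R) ∈ I ⊔ J)
  refine ⟨decompose 𝒜 x 0, hI 0 hx, decompose 𝒜 y 0, hJ 0 hy, SetLike.coe_mem _,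
    SetLike.coe_mem _, ?_⟩
  rw [← AddSubgroup.coe_add, ← DirectSum.add_apply, ← decompose_add, hxy,
    decompose_of_mem_same 𝒜 (SetLike.one_mem_graded 𝒜)]

theorem exists_degree_zero_eq_mul_of_mem_span_singleton {z b : R} (hz : z ∈ 𝒜 0)
    (hb : b ∈ 𝒜 0) (hbz : b ∈ Ideal.span {z}) : ∃ c ∈ 𝒜 0, b = c * z := by
  obtain ⟨c, rfl⟩ := Ideal.mem_span_singleton'.mp hbz
  refine ⟨decompose 𝒜 c 0, SetLike.coe_mem _, ?_⟩
  rw [← coe_decompose_mul_of_right_mem_zero 𝒜 hz, decompose_of_mem_same 𝒜 hb]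

theorem exists_le_maximal_isHomogeneous_disjoint (S : Submonoid R) {I : Ideal R}
    (hI : I.IsHomogeneous 𝒜) (hIS : Disjoint (I : Set R) S) :
    ∃ J, I ≤ J ∧ Maximal (fun J : Ideal R => J.IsHomogeneous 𝒜 ∧ Disjoint (J : Set R) S) J := by
  refine zorn_le_nonempty₀ _ (fun c hc hchain J hJ => ?_) I ⟨hI, hIS⟩
  refine ⟨sSup c, ⟨Ideal.IsHomogeneous.sSup fun K hK => (hc hK).1,
    Set.disjoint_left.mpr fun x hx => ?_⟩, fun _ => le_sSup⟩
  obtain ⟨K, hK, hxK⟩ := (Submodule.mem_sSup_of_directed ⟨J, hJ⟩ hchain.directedOn).mp hx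
  exact Set.disjoint_left.mp (hc hK).2 hxK

theorem isGradedPrime_of_maximal_isHomogeneous_disjoint {S : Submonoid R} {Q : Ideal R}
    (hQ : Maximal (fun J : Ideal R => J.IsHomogeneous 𝒜 ∧ Disjoint (J : Set R) S) Q) :
    IsGradedPrime 𝒜 Q := by
  obtain ⟨⟨hQh, hQS⟩, hQmax⟩ := hQ
  have meets : ∀ z, SetLike.IsHomogeneousElem 𝒜 z → z ∉ Q → ∃ q ∈ Q, ∃ c : R, q + c * z ∈ S := by
    intro z hz hzQ
    have : ¬Disjoint ((Q ⊔ Ideal.span {z} : Ideal R) : Set R) S := fun hdisj =>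
      hzQ (hQmax ⟨hQh.sup_span_singleton hz, hdisj⟩ le_sup_left
        (Ideal.mem_sup_right (Ideal.mem_span_singleton_self z)))
    obtain ⟨t, htJ, htS⟩ := Set.not_disjoint_iff.mp this
    obtain ⟨q, hq, w, hw, rfl⟩ := Submodule.mem_sup.mp htJ
    obtain ⟨c, rfl⟩ := Ideal.mem_span_singleton'.mp hw
    exact ⟨q, hq, c, htS⟩
  refine ⟨hQh, fun htop => Set.disjoint_left.mp hQS (htop ▸ Submodule.mem_top) S.one_mem,
    fun x y hx hy hxy => ?_⟩
  by_contra! h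
  obtain ⟨q₁, hq₁, c₁, hs₁⟩ := meets x hx h.1
  obtain ⟨q₂, hq₂, c₂, hs₂⟩ := meets y hy h.2
  refine Set.disjoint_left.mp hQS ?_ (S.mul_mem hs₁ hs₂)
  have expand : (q₁ + c₁ * x) * (q₂ + c₂ * y) =
      q₁ * (q₂ + c₂ * y) + c₁ * (x * q₂) + c₁ * c₂ * (x * y) := by ring
  rw [expand]
  exact Q.add_mem (Q.add_mem (Q.mul_mem_right _ hq₁) (Q.mul_mem_left _ (Q.mul_mem_left _ hq₂)))
    (Q.mul_mem_left _ hxy)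

theorem isGradedMaximal_iff_maximal {M : Ideal R} :
    IsGradedMaximal 𝒜 M ↔ Maximal (fun J : Ideal R =>
      J.IsHomogeneous 𝒜 ∧ Disjoint (J : Set R) (⊥ : Submonoid R)) M := by
  simp only [Ideal.disjoint_bot_iff_ne_top]
  constructor
  · rintro ⟨hMh, hMne, hM⟩
    exact ⟨⟨hMh, hMne⟩, fun J ⟨hJh, hJne⟩ hMJ => (hM J hJh hMJ hJne).le⟩
  · rintro ⟨⟨hMh, hMne⟩, hM⟩
    exact ⟨hMh, hMne, fun J hJh hMJ hJne => le_antisymm (hM ⟨hJh, hJne⟩ hMJ) hMJ⟩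

theorem IsGradedMaximal.isGradedPrime {M : Ideal R} (hM : IsGradedMaximal 𝒜 M) :
    IsGradedPrime 𝒜 M :=
  isGradedPrime_of_maximal_isHomogeneous_disjoint (isGradedMaximal_iff_maximal.mp hM)

theorem exists_isGradedMaximal_le {I : Ideal R} (hI : I.IsHomogeneous 𝒜) (hI' : I ≠ ⊤) :
    ∃ M, IsGradedMaximal 𝒜 M ∧ I ≤ M := by
  obtain ⟨M, hIM, hM⟩ := exists_le_maximal_isHomogeneous_disjoint ⊥ hI
    (Ideal.disjoint_bot_iff_ne_top.mpr hI')
  exact ⟨M, isGradedMaximal_iff_maximal.mpr hM, hIM⟩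

theorem IsGradedMaximal.sup_span_singleton_eq_top {M : Ideal R} (hM : IsGradedMaximal 𝒜 M)
    {r : R} (hr : SetLike.IsHomogeneousElem 𝒜 r) (hrM : r ∉ M) : M ⊔ Ideal.span {r} = ⊤ := by
  by_contra hne
  exact hrM (hM.2.2 _ (hM.1.sup_span_singleton hr) le_sup_left hne ▸
    Ideal.mem_sup_right (Ideal.mem_span_singleton_self r))

theorem GSpec.isOpen_basicOpen {r : R} (hr : SetLike.IsHomogeneousElem 𝒜 r) :
    IsOpen {P : GSpec 𝒜 | r ∉ P.1} :=
  TopologicalSpace.isOpen_generateFrom_of_mem ⟨r, hr, rfl⟩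

theorem GSpec.specializes_iff_le {P Q : GSpec 𝒜} : P ⤳ Q ↔ P.1 ≤ Q.1 := by
  constructor
  · intro h x hxP
    refine Q.2.1.mem_iff.mpr fun i => ?_
    by_contra hxQ
    exact specializes_iff_forall_open.mp h _ (isOpen_basicOpen ⟨i, SetLike.coe_mem _⟩) hxQ
      (P.2.1 i hxP)
  · intro h
    simp_rw [Specializes, TopologicalSpace.nhds_generateFrom, le_iInf₂_iff]
    rintro _ ⟨hQs, r, hr, rfl⟩
    exact iInf₂_le_of_le {P : GSpec 𝒜 | r ∉ P.1} ⟨fun hrP => hQs (h hrP), r, hr, rfl⟩ le_rfl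

theorem IsGelfandGraded.exists_one_add_mul_mul_one_add_mul_eq_zero (hG : IsGelfandGraded 𝒜)
    {a b : R} (ha : a ∈ 𝒜 0) (hb : b ∈ 𝒜 0) (hab : a + b = 1) :
    ∃ r ∈ 𝒜 0, ∃ s ∈ 𝒜 0, (1 + r * a) * (1 + s * b) = 0 := by
  let A₀ := SetLike.GradeZero.subring 𝒜
  let T : Submonoid R :=
    { carrier := {x | ∃ r ∈ 𝒜 0, ∃ s ∈ 𝒜 0, x = (1 + r * a) * (1 + s * b)}
      one_mem' := ⟨0, zero_mem _, 0, zero_mem _, by ring⟩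
      mul_mem' := by
        rintro _ _ ⟨r, hr, s, hs, rfl⟩ ⟨r', hr', s', hs', rfl⟩
        exact ⟨r + r' + r * r' * a,
          A₀.add_mem (A₀.add_mem hr hr') (A₀.mul_mem (A₀.mul_mem hr hr') ha),
          s + s' + s * s' * b,
          A₀.add_mem (A₀.add_mem hs hs') (A₀.mul_mem (A₀.mul_mem hs hs') hb), by ring⟩ }
  by_contra! h
  have hT : Disjoint ((⊥ : Ideal R) : Set R) T := by
    refine Set.disjoint_left.mpr fun x hx hxT => ?_
    obtain ⟨r, hr, s, hs, rfl⟩ := hxT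
    exact h r hr s hs (Ideal.mem_bot.mp hx)
  obtain ⟨Q, -, hQ⟩ := exists_le_maximal_isHomogeneous_disjoint T (Ideal.IsHomogeneous.bot 𝒜) hT
  -- a degree-zero relation `q + c * z = 1` with `q ∈ Q` would put `q = 1 - c * z` in `Q ∩ T`
  have proper : ∀ z ∈ 𝒜 0, (∀ c ∈ 𝒜 0, 1 - c * z ∈ T) → Q ⊔ Ideal.span {z} ≠ ⊤ := by
    intro z hz hzT htop
    obtain ⟨q, hq, w, hw, -, hw0, hqw⟩ := exists_degree_zero_add_eq_one hQ.1.1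
      (Ideal.homogeneous_span 𝒜 {z} (by rintro w rfl; exact ⟨0, hz⟩)) htop
    obtain ⟨c, hc, rfl⟩ := exists_degree_zero_eq_mul_of_mem_span_singleton hz hw0 hw
    exact Set.disjoint_left.mp hQ.1.2 hq (eq_sub_of_add_eq hqw ▸ hzT c hc)
  obtain ⟨Ma, hMa, hQMa⟩ := exists_isGradedMaximal_le (hQ.1.1.sup_span_singleton ⟨0, ha⟩)
    (proper a ha fun c hc => ⟨-c, neg_mem hc, 0, zero_mem _, by ring⟩)
  obtain ⟨Mb, hMb, hQMb⟩ := exists_isGradedMaximal_le (hQ.1.1.sup_span_singleton ⟨0, hb⟩)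
    (proper b hb fun c hc => ⟨0, zero_mem _, -c, neg_mem hc, by ring⟩)
  have hM : Ma = Mb := (hG Q (isGradedPrime_of_maximal_isHomogeneous_disjoint hQ)).unique
    ⟨hMa, le_sup_left.trans hQMa⟩ ⟨hMb, le_sup_left.trans hQMb⟩
  refine hMb.2.1 ((Ideal.eq_top_iff_one _).mpr (hab ▸ Mb.add_mem ?_ ?_))
  · exact hM ▸ hQMa (Ideal.mem_sup_right (Ideal.mem_span_singleton_self a))
  · exact hQMb (Ideal.mem_sup_right (Ideal.mem_span_singleton_self b))

theorem IsGelfandGraded.exists_degree_zero_separating (hG : IsGelfandGraded 𝒜) {M : Ideal R}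
    (hM : IsGradedMaximal 𝒜 M) {r : R} (hr : SetLike.IsHomogeneousElem 𝒜 r) (hrM : r ∉ M) :
    ∃ g ∈ 𝒜 0, g ∉ M ∧ ∀ Q N : Ideal R, IsGradedPrime 𝒜 Q → IsGradedMaximal 𝒜 N → Q ≤ N →
      g ∉ Q → r ∉ N := by
  obtain ⟨a, haM, b, hbr, ha, hb, hab⟩ := exists_degree_zero_add_eq_one hM.1
    (Ideal.homogeneous_span 𝒜 {r} (by rintro w rfl; exact hr))
    (hM.sup_span_singleton_eq_top hr hrM)
  obtain ⟨u, hu, s, hs, hus⟩ := hG.exists_one_add_mul_mul_one_add_mul_eq_zero ha hb hab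
  refine ⟨1 + u * a, one_add_mul_mem_degree_zero hu ha,
    fun hg => hM.2.1 (Ideal.eq_top_of_one_add_mul_mem haM hg), ?_⟩
  intro Q N hQ hN hQN hgQ hrN
  have hsbQ : 1 + s * b ∈ Q :=
    (hQ.2.2 _ _ ⟨0, one_add_mul_mem_degree_zero hu ha⟩ ⟨0, one_add_mul_mem_degree_zero hs hb⟩
      (hus ▸ Q.zero_mem)).resolve_left hgQ
  have hbN : b ∈ N := (Ideal.span_singleton_le_iff_mem N).mpr hrN hbr
  exact hN.2.1 (Ideal.eq_top_of_one_add_mul_mem hbN (hQN hsbQ))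

noncomputable def IsGelfandGraded.retraction (hG : IsGelfandGraded 𝒜) (P : GSpec 𝒜) :
    GMax 𝒜 :=
  have hM := (hG P.1 P.2).exists.choose_spec
  ⟨⟨_, hM.1.isGradedPrime⟩, hM.1⟩

theorem IsGelfandGraded.le_retraction (hG : IsGelfandGraded 𝒜) (P : GSpec 𝒜) :
    P.1 ≤ (hG.retraction P).1.1 :=
  (hG P.1 P.2).exists.choose_spec.2

theorem IsGelfandGraded.eq_retraction (hG : IsGelfandGraded 𝒜) {P : GSpec 𝒜} {N : Ideal R}
    (hN : IsGradedMaximal 𝒜 N) (hPN : P.1 ≤ N) : N = (hG.retraction P).1.1 :=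
  (hG P.1 P.2).unique ⟨hN, hPN⟩ (hG P.1 P.2).exists.choose_spec

theorem IsGelfandGraded.retraction_of_mem (hG : IsGelfandGraded 𝒜) (M : GSpec 𝒜)
    (hM : M ∈ GMax 𝒜) : hG.retraction M = ⟨M, hM⟩ :=
  Subtype.ext (Subtype.ext (hG.eq_retraction hM le_rfl).symm)

theorem IsGelfandGraded.continuous_retraction (hG : IsGelfandGraded 𝒜) :
    Continuous hG.retraction := by
  refine continuous_induced_rng.mpr (continuous_generateFrom_iff.mpr ?_)
  rintro _ ⟨r, hr, rfl⟩
  refine isOpen_iff_forall_mem_open.mpr fun P hP => ?_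
  obtain ⟨g, hg, hgM, hsep⟩ := hG.exists_degree_zero_separating (hG.retraction P).2 hr hP
  exact ⟨{Q | g ∉ Q.1}, fun Q hgQ => hsep Q.1 _ Q.2 (hG.retraction Q).2 (hG.le_retraction Q) hgQ,
    GSpec.isOpen_basicOpen ⟨0, hg⟩, fun hgP => hgM (hG.le_retraction P hgP)⟩

theorem isGelfandGraded_of_continuous_retraction (φ : GSpec 𝒜 → GMax 𝒜) (hφ : Continuous φ)
    (hφM : ∀ (M : GSpec 𝒜) (hM : M ∈ GMax 𝒜), φ M = ⟨M, hM⟩) : IsGelfandGraded 𝒜 := by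
  intro P hP
  have eq_φ : ∀ N, IsGradedMaximal 𝒜 N → P ≤ N → N = (φ ⟨P, hP⟩).1.1 := by
    intro N hN hPN
    let N' : GSpec 𝒜 := ⟨N, hN.isGradedPrime⟩
    have hspec : (φ ⟨P, hP⟩).1 ⤳ (φ N').1 :=
      ((GSpec.specializes_iff_le (Q := N')).mpr hPN |>.map hφ).map continuous_subtype_val
    rw [hφM N' hN] at hspec
    exact (φ ⟨P, hP⟩).2.2.2 N hN.1 (GSpec.specializes_iff_le.mp hspec) hN.2.1
  obtain ⟨M, hM, hPM⟩ := exists_isGradedMaximal_le hP.1 hP.2.1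
  exact ⟨M, ⟨hM, hPM⟩, fun N ⟨hN, hPN⟩ => (eq_φ N hN hPN).trans (eq_φ M hM hPM).symm⟩

end GelfandRetraction

section Statements

variable {G : Type*} [AddGroup G] [DecidableEq G] {R : Type*} [CommRing R]
variable (𝒜 : G → AddSubgroup R) [GradedRing 𝒜]

theorem stmt_3 : IsGelfandGraded 𝒜 ↔
    ∃ φ : GSpec 𝒜 → (GMax 𝒜 : Set (GSpec 𝒜)), Continuous φ ∧
      ∀ (M : GSpec 𝒜) (hM : M ∈ GMax 𝒜), φ M = ⟨M, hM⟩ :=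
  ⟨fun hG => ⟨hG.retraction, hG.continuous_retraction, hG.retraction_of_mem⟩,
    fun ⟨φ, hφ, hφM⟩ => isGelfandGraded_of_continuous_retraction φ hφ hφM⟩
end Statements
end

section
/- A commutative ring R is a Gelfand ring (every prime ideal is contained in a unique maximal ideal) if and only if any two disjoint Zariski closed subsets F, F' of Spec(R) can be separated by a regular function, i.e., there exists r ∈ R whose image in R_P is 0 for all P ∈ F and 1 for all P ∈ F'. -/
open PrimeSpectrum

section Aux

variable {R : Type*} [CommRing R]

/-- The kernel ideal of localization at `1 + I`. -/
private def auxT (I : Ideal R) : Ideal R where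
  carrier := { x | ∃ i ∈ I, (1 + i) * x = 0 }
  add_mem' := by
    rintro x y ⟨i, hi, hx⟩ ⟨j, hj, hy⟩
    refine ⟨i + j + i * j, by exact add_mem (add_mem hi hj) (I.mul_mem_right j hi), ?_⟩
    have : (1 + (i + j + i * j)) * (x + y) = (1 + j) * ((1 + i) * x) + (1 + i) * ((1 + j) * y) := by
      ring
    rw [this, hx, hy]; ring
  zero_mem' := ⟨0, I.zero_mem, by ring⟩
  smul_mem' := by
    rintro c x ⟨i, hi, hx⟩
    exact ⟨i, hi, by rw [smul_eq_mul, mul_comm c x, ← mul_assoc, hx, zero_mul]⟩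

private lemma gelfand_char
    (h : ∀ P : Ideal R, P.IsPrime → ∃! M : Ideal R, M.IsMaximal ∧ P ≤ M)
    (a b : R) (hab : a + b = 1) : ∃ c d : R, (1 + a * c) * (1 + b * d) = 0 := by
  by_contra hcon
  push_neg at hcon
  set S : Submonoid R :=
    { carrier := { x | ∃ c d, x = (1 + a * c) * (1 + b * d) }
      mul_mem' := by
        rintro x y ⟨c, d, rfl⟩ ⟨c', d', rfl⟩
        exact ⟨c + c' + a * c * c', d + d' + b * d * d', by ring⟩
      one_mem' := ⟨0, 0, by ring⟩ } with hS
  have hdisj : Disjoint ((⊥ : Ideal R) : Set R) (S : Set R) := by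
    rw [Set.disjoint_left]
    rintro x hx ⟨c, d, rfl⟩
    simp only [SetLike.mem_coe, Ideal.mem_bot] at hx
    exact hcon c d hx
  obtain ⟨P, hP, -, hPS⟩ := Ideal.exists_le_prime_disjoint ⊥ S hdisj
  -- P ⊔ (a) is proper
  have ha : P ⊔ Ideal.span {a} ≠ ⊤ := by
    intro htop
    rw [Ideal.eq_top_iff_one, Submodule.mem_sup] at htop
    obtain ⟨p, hp, q, hq, hpq⟩ := htop
    rw [Ideal.mem_span_singleton] at hq
    obtain ⟨c, rfl⟩ := hq
    have : (1 + a * (-c)) * (1 + b * 0) ∈ P := by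
      have : (1 + a * (-c)) * (1 + b * 0) = p := by linear_combination -hpq
      rw [this]; exact hp
    exact Set.disjoint_left.mp hPS this ⟨-c, 0, rfl⟩
  have hb : P ⊔ Ideal.span {b} ≠ ⊤ := by
    intro htop
    rw [Ideal.eq_top_iff_one, Submodule.mem_sup] at htop
    obtain ⟨p, hp, q, hq, hpq⟩ := htop
    rw [Ideal.mem_span_singleton] at hq
    obtain ⟨d, rfl⟩ := hq
    have : (1 + a * 0) * (1 + b * (-d)) ∈ P := by
      have : (1 + a * 0) * (1 + b * (-d)) = p := by linear_combination -hpq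
      rw [this]; exact hp
    exact Set.disjoint_left.mp hPS this ⟨0, -d, rfl⟩
  obtain ⟨Ma, hMa, hMa'⟩ := Ideal.exists_le_maximal _ ha
  obtain ⟨Mb, hMb, hMb'⟩ := Ideal.exists_le_maximal _ hb
  obtain ⟨M, -, huniq⟩ := h P hP
  have e1 : Ma = M := huniq Ma ⟨hMa, le_trans le_sup_left hMa'⟩
  have e2 : Mb = M := huniq Mb ⟨hMb, le_trans le_sup_left hMb'⟩
  have haM : a ∈ M := e1 ▸ hMa' (le_sup_right (a := P) (Ideal.mem_span_singleton_self a))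
  have hbM : b ∈ M := e2 ▸ hMb' (le_sup_right (a := P) (Ideal.mem_span_singleton_self b))
  have : (1 : R) ∈ M := hab ▸ M.add_mem haM hbM
  exact hMa.ne_top (e1 ▸ (Ideal.eq_top_iff_one M).mpr this)

private lemma key_step
    (h : ∀ P : Ideal R, P.IsPrime → ∃! M : Ideal R, M.IsMaximal ∧ P ≤ M)
    (I : Ideal R) (M : Ideal R) (hM : M.IsMaximal) (i : R) (hi : i ∈ I)
    (hiM : 1 + i ∈ M) (hTM : auxT I ≤ M) : False := by
  obtain ⟨c, d, hcd⟩ := gelfand_char h (-i) (1 + i) (by ring)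
  have hx : (1 + (1 + i) * d) ∈ auxT I := by
    refine ⟨-(i * c), I.neg_mem (I.mul_mem_right c hi), ?_⟩
    calc (1 + -(i * c)) * (1 + (1 + i) * d) = (1 + (-i) * c) * (1 + (1 + i) * d) := by ring
    _ = 0 := hcd
  have h1 : (1 : R) ∈ M := by
    have := M.sub_mem (hTM hx) (M.mul_mem_right d hiM)
    simpa using this
  exact hM.ne_top ((Ideal.eq_top_iff_one M).mpr h1)

private lemma mem_M_of_not_le (M : Ideal R) (hM : M.IsMaximal) (I : Ideal R)
    (hIM : ¬ I ≤ M) : ∃ i ∈ I, 1 + i ∈ M := by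
  have htop : M ⊔ I = ⊤ := hM.1.2 _ (lt_of_le_of_ne le_sup_left
    (fun e => hIM (e ▸ le_sup_right)))
  rw [Ideal.eq_top_iff_one, Submodule.mem_sup] at htop
  obtain ⟨m, hm, i, hi, hmi⟩ := htop
  refine ⟨-i, I.neg_mem hi, ?_⟩
  have : 1 + -i = m := by linear_combination -hmi
  rw [this]; exact hm

end Aux

theorem stmt_10 {R : Type*} [CommRing R] :
    (∀ P : Ideal R, P.IsPrime → ∃! M : Ideal R, M.IsMaximal ∧ P ≤ M) ↔
    ∀ F F' : Set (PrimeSpectrum R), IsClosed F → IsClosed F' → Disjoint F F' →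
      ∃ r : R, (∀ P ∈ F, algebraMap R (Localization.AtPrime P.asIdeal) r = 0) ∧
        ∀ P ∈ F', algebraMap R (Localization.AtPrime P.asIdeal) r = 1 := by
  constructor
  · intro h F F' hF hF' hdisj
    obtain ⟨I, rfl⟩ := (isClosed_iff_zeroLocus_ideal F).mp hF
    obtain ⟨J, rfl⟩ := (isClosed_iff_zeroLocus_ideal F').mp hF'
    -- I + J = ⊤
    have hIJ : I ⊔ J = ⊤ := by
      by_contra htop
      obtain ⟨M, hM, hM'⟩ := Ideal.exists_le_maximal _ htop
      have : (⟨M, hM.isPrime⟩ : PrimeSpectrum R) ∈ zeroLocus (I : Set R) ∩ zeroLocus (J : Set R) :=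
        ⟨fun x hx => hM' (le_sup_left (a := I) hx), fun x hx => hM' (le_sup_right (a := I) hx)⟩
      exact Set.disjoint_left.mp hdisj this.1 this.2
    -- auxT I + auxT J = ⊤
    have hT : auxT I ⊔ auxT J = ⊤ := by
      by_contra htop
      obtain ⟨M, hM, hM'⟩ := Ideal.exists_le_maximal _ htop
      have hTI : auxT I ≤ M := le_trans le_sup_left hM'
      have hTJ : auxT J ≤ M := le_trans le_sup_right hM'
      by_cases hIM : I ≤ M
      · have hJM : ¬ J ≤ M := by
          intro hJM
          exact hM.ne_top (top_le_iff.mp (hIJ ▸ sup_le hIM hJM))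
        obtain ⟨j, hj, hjM⟩ := mem_M_of_not_le M hM J hJM
        exact key_step h J M hM j hj hjM hTJ
      · obtain ⟨i, hi, hiM⟩ := mem_M_of_not_le M hM I hIM
        exact key_step h I M hM i hi hiM hTI
    rw [Ideal.eq_top_iff_one, Submodule.mem_sup] at hT
    obtain ⟨x, hx, y, hy, hxy⟩ := hT
    refine ⟨x, ?_, ?_⟩
    · rintro P hP
      obtain ⟨i, hi, hix⟩ := hx
      rw [IsLocalization.map_eq_zero_iff P.asIdeal.primeCompl]
      refine ⟨⟨1 + i, fun hmem => ?_⟩, hix⟩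
      have : (1 : R) ∈ P.asIdeal := by
        have := P.asIdeal.sub_mem hmem (hP hi)
        simpa using this
      exact P.isPrime.ne_top ((Ideal.eq_top_iff_one _).mpr this)
    · rintro P hP
      obtain ⟨j, hj, hjy⟩ := hy
      have : algebraMap R (Localization.AtPrime P.asIdeal) (x - 1) = 0 := by
        rw [IsLocalization.map_eq_zero_iff P.asIdeal.primeCompl]
        refine ⟨⟨1 + j, fun hmem => ?_⟩, ?_⟩
        · have : (1 : R) ∈ P.asIdeal := by
            have := P.asIdeal.sub_mem hmem (hP hj)
            simpa using this
          exact P.isPrime.ne_top ((Ideal.eq_top_iff_one _).mpr this)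
        · have : x - 1 = -y := by linear_combination hxy
          rw [this]
          rw [mul_neg, hjy, neg_zero]
      have := congrArg (· + algebraMap R (Localization.AtPrime P.asIdeal) 1) this
      simpa [map_sub, sub_add_cancel] using this
  · intro h P hP
    obtain ⟨M, hM, hPM⟩ := Ideal.exists_le_maximal P hP.ne_top
    refine ⟨M, ⟨hM, hPM⟩, ?_⟩
    rintro M' ⟨hM', hPM'⟩
    by_contra hne
    have hne' : (⟨M', hM'.isPrime⟩ : PrimeSpectrum R) ≠ ⟨M, hM.isPrime⟩ := by
      intro e; exact hne (congrArg PrimeSpectrum.asIdeal e)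
    obtain ⟨r, h0, h1⟩ := h {⟨M', hM'.isPrime⟩} {⟨M, hM.isPrime⟩}
      ((isClosed_singleton_iff_isMaximal _).mpr hM')
      ((isClosed_singleton_iff_isMaximal _).mpr hM)
      (Set.disjoint_singleton.mpr hne')
    have e0 := h0 _ rfl
    have e1 := h1 _ rfl
    rw [IsLocalization.map_eq_zero_iff M'.primeCompl] at e0
    obtain ⟨⟨s, hs⟩, hsr⟩ := e0
    have e1' : algebraMap R (Localization.AtPrime M) (r - 1) = 0 := by
      rw [map_sub, e1, map_one, sub_self]
    rw [IsLocalization.map_eq_zero_iff M.primeCompl] at e1'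
    obtain ⟨⟨t, ht⟩, htr⟩ := e1'
    -- s ∉ M' ⊇ P, so s ∉ P; s*r = 0 ∈ P ⇒ r ∈ P
    have hsP : s ∉ P := fun hx => hs (hPM' hx)
    have htP : t ∉ P := fun hx => ht (hPM hx)
    have hrP : r ∈ P := by
      rcases hP.mem_or_mem (show s * r ∈ P by rw [hsr]; exact P.zero_mem) with h' | h'
      · exact absurd h' hsP
      · exact h'
    have hr1P : r - 1 ∈ P := by
      rcases hP.mem_or_mem (show t * (r - 1) ∈ P by rw [htr]; exact P.zero_mem) with h' | h'
      · exact absurd h' htP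
      · exact h'
    have : (1 : R) ∈ P := by
      have := P.sub_mem hrP hr1P
      simpa using this
    exact hP.ne_top ((Ideal.eq_top_iff_one _).mpr this)
end

section
/- A G-graded commutative ring R is a Gelfand graded ring if and only if its identity component R_e is a Gelfand commutative ring. -/
/-! Restriction `M ↦ M ∩ 𝒜 0` and extension `p ↦ p^#` are mutually inverse bijections between
the graded maximal ideals of `R` and the maximal ideals of `𝒜 0`, and for a homogeneous `P` they
match the graded maximal ideals above `P` with the maximal ideals above `P ∩ 𝒜 0`. Graded primes
restrict to primes and primes extend to graded primes, so the two uniqueness conditions agree. -/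

section GradedExtension

open DirectSum

variable {G : Type*} [AddGroup G] [DecidableEq G] {R : Type*} [CommRing R]
variable {𝒜 : G → AddSubgroup R} [GradedRing 𝒜]

namespace Ideal

variable (𝒜) in
/-- The ideal `p^#` of the paper: `x ∈ p^#` iff `x_g · 𝒜 h ⊆ p` whenever `g + h = 0`.
It is the largest homogeneous ideal of `R` whose degree-zero part is `p`. -/
def gradedExtension (p : Ideal (𝒜 0)) : Ideal R :=
  let S : AddSubmonoid R :=
    { carrier := {x | ∀ g h, g + h = 0 → ∀ y ∈ 𝒜 h, ∃ a ∈ p, (a : R) = decompose 𝒜 x g * y}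
      add_mem' := by
        intro x x' hx hx' g h hgh y hy
        obtain ⟨a, ha, hax⟩ := hx g h hgh y hy
        obtain ⟨a', ha', hax'⟩ := hx' g h hgh y hy
        exact ⟨a + a', p.add_mem ha ha', by simp [hax, hax', add_mul]⟩
      zero_mem' := fun _ _ _ _ _ ↦ ⟨0, p.zero_mem, by simp⟩ }
  { S with
    smul_mem' := by
      intro r x hx
      induction r using DirectSum.Decomposition.inductionOn 𝒜 with
      | zero => rw [zero_smul]; exact S.zero_mem
      | add r r' hr hr' => rw [add_smul]; exact S.add_mem hr hr'
      | @homogeneous i r =>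
        intro g h hgh y hy
        have hdeg : (-i + g) + (h + i) = 0 := by
          rw [← add_assoc, add_assoc (-i) g h, hgh, add_zero, neg_add_cancel]
        obtain ⟨a, ha, hax⟩ := hx (-i + g) (h + i) hdeg (y * r) (SetLike.mul_mem_graded hy r.2)
        refine ⟨a, ha, ?_⟩
        have hcomp : (decompose 𝒜 (r * x) g : R) = r * decompose 𝒜 x (-i + g) := by
          have := coe_decompose_mul_add_of_left_mem 𝒜 (b := x) (j := -i + g) r.2
          rwa [← add_assoc, add_neg_cancel, zero_add] at this
        rw [smul_eq_mul, hcomp, hax]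
        ring }

variable {p : Ideal (𝒜 0)}

theorem mem_gradedExtension {x : R} : x ∈ gradedExtension 𝒜 p ↔
    ∀ g h, g + h = 0 → ∀ y ∈ 𝒜 h, ∃ a ∈ p, (a : R) = decompose 𝒜 x g * y :=
  Iff.rfl

theorem mem_gradedExtension_of_mem_graded {x : R} {i : G} (hx : x ∈ 𝒜 i) :
    x ∈ gradedExtension 𝒜 p ↔ ∀ h, i + h = 0 → ∀ y ∈ 𝒜 h, ∃ a ∈ p, (a : R) = x * y := by
  rw [mem_gradedExtension]
  refine ⟨fun H h hih ↦ decompose_of_mem_same 𝒜 hx ▸ H i h hih, fun H g h hgh y hy ↦ ?_⟩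
  obtain rfl | hig := eq_or_ne i g
  · rw [decompose_of_mem_same 𝒜 hx]
    exact H h hgh y hy
  · rw [decompose_of_mem_ne 𝒜 hx hig]
    exact ⟨0, p.zero_mem, by simp⟩

theorem gradedExtension_isHomogeneous (p : Ideal (𝒜 0)) :
    (gradedExtension 𝒜 p).IsHomogeneous 𝒜 :=
  fun i _ hx ↦ (mem_gradedExtension_of_mem_graded (SetLike.coe_mem _)).2 (hx i)

@[simp]
theorem comap_gradedExtension (p : Ideal (𝒜 0)) :
    (gradedExtension 𝒜 p).comap (algebraMap (𝒜 0) R) = p := by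
  ext a
  rw [mem_comap, SetLike.GradeZero.algebraMap_apply, mem_gradedExtension_of_mem_graded a.2]
  refine ⟨fun H ↦ ?_, fun ha h hh y hy ↦ ?_⟩
  · obtain ⟨b, hb, hba⟩ := H 0 (add_zero 0) 1 (SetLike.one_mem_graded 𝒜)
    rw [mul_one, ← Subtype.ext_iff] at hba
    exact hba ▸ hb
  · rw [zero_add] at hh
    subst hh
    exact ⟨⟨y, hy⟩ * a, p.mul_mem_left _ ha, mul_comm _ _⟩

theorem le_gradedExtension_iff {P : Ideal R} (hP : P.IsHomogeneous 𝒜) :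
    P ≤ gradedExtension 𝒜 p ↔ P.comap (algebraMap (𝒜 0) R) ≤ p := by
  refine ⟨fun H ↦ comap_gradedExtension p ▸ comap_mono H, fun H x hx g h hgh y hy ↦ ?_⟩
  have hdeg : (decompose 𝒜 x g : R) * y ∈ 𝒜 0 :=
    hgh ▸ SetLike.mul_mem_graded (SetLike.coe_mem _) hy
  exact ⟨⟨_, hdeg⟩, H (P.mul_mem_right y (hP g hx)), rfl⟩

theorem gradedExtension_ne_top (hp : p ≠ ⊤) : gradedExtension 𝒜 p ≠ ⊤ := by
  contrapose! hp
  rw [← comap_gradedExtension p, hp, comap_top]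

theorem isGradedPrime_gradedExtension (hp : p.IsPrime) :
    IsGradedPrime 𝒜 (gradedExtension 𝒜 p) := by
  refine ⟨gradedExtension_isHomogeneous p, gradedExtension_ne_top hp.ne_top, ?_⟩
  rintro a b ⟨i, hai⟩ ⟨j, hbj⟩ hab
  by_contra! ⟨ha, hb⟩
  simp only [mem_gradedExtension_of_mem_graded hai, mem_gradedExtension_of_mem_graded hbj,
    not_forall, not_exists, not_and] at ha hb
  obtain ⟨h, hih, y, hy, hay⟩ := ha
  obtain ⟨h', hjh', v, hv, hbv⟩ := hb
  have hdeg : (i + j) + (h' + h) = 0 := by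
    rw [← add_assoc, add_assoc i j h', hjh', add_zero, hih]
  obtain ⟨c, hc, hcab⟩ := (mem_gradedExtension_of_mem_graded (SetLike.mul_mem_graded hai hbj)).1
    hab _ hdeg _ (SetLike.mul_mem_graded hv hy)
  let ay : 𝒜 0 := ⟨a * y, hih ▸ SetLike.mul_mem_graded hai hy⟩
  let bv : 𝒜 0 := ⟨b * v, hjh' ▸ SetLike.mul_mem_graded hbj hv⟩
  have hc' : c = ay * bv := Subtype.ext (by rw [hcab]; show _ = a * y * (b * v); ring)
  rcases hp.mem_or_mem (hc' ▸ hc) with hmem | hmem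
  · exact hay ay hmem rfl
  · exact hbv bv hmem rfl

theorem isGradedMaximal_gradedExtension (hp : p.IsMaximal) :
    IsGradedMaximal 𝒜 (gradedExtension 𝒜 p) := by
  refine ⟨gradedExtension_isHomogeneous p, gradedExtension_ne_top hp.ne_top, ?_⟩
  intro J hJ hle hJ_ne_top
  have hJp : J.comap (algebraMap (𝒜 0) R) = p :=
    (hp.eq_of_le (comap_ne_top _ hJ_ne_top) (comap_gradedExtension p ▸ comap_mono hle)).symm
  exact le_antisymm ((le_gradedExtension_iff hJ).2 hJp.le) hle

end Ideal

open Ideal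

theorem IsGradedPrime.isPrime_comap {P : Ideal R} (hP : IsGradedPrime 𝒜 P) :
    (P.comap (algebraMap (𝒜 0) R)).IsPrime :=
  ⟨comap_ne_top _ hP.2.1, fun {a b} hab ↦ hP.2.2 a b ⟨0, a.2⟩ ⟨0, b.2⟩ hab⟩

namespace IsGradedMaximal

variable {M : Ideal R}

theorem gradedExtension_comap (hM : IsGradedMaximal 𝒜 M) :
    gradedExtension 𝒜 (M.comap (algebraMap (𝒜 0) R)) = M :=
  hM.2.2 _ (gradedExtension_isHomogeneous _) ((le_gradedExtension_iff hM.1).2 le_rfl)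
    (gradedExtension_ne_top (comap_ne_top _ hM.2.1))

theorem isMaximal_comap (hM : IsGradedMaximal 𝒜 M) :
    (M.comap (algebraMap (𝒜 0) R)).IsMaximal := by
  obtain ⟨m, hm, hMm⟩ := exists_le_maximal _ (comap_ne_top (algebraMap (𝒜 0) R) hM.2.1)
  have hm_eq : gradedExtension 𝒜 m = M :=
    hM.2.2 _ (gradedExtension_isHomogeneous m) ((le_gradedExtension_iff hM.1).2 hMm)
      (gradedExtension_ne_top hm.ne_top)
  rwa [← hm_eq, comap_gradedExtension]

end IsGradedMaximal

theorem existsUnique_isGradedMaximal_le_iff {P : Ideal R} (hP : P.IsHomogeneous 𝒜) :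
    (∃! M, IsGradedMaximal 𝒜 M ∧ P ≤ M) ↔
      ∃! m : Ideal (𝒜 0), m.IsMaximal ∧ P.comap (algebraMap (𝒜 0) R) ≤ m :=
  Equiv.existsUnique_subtype_congr
    { toFun M := ⟨M.1.comap (algebraMap (𝒜 0) R), M.2.1.isMaximal_comap, comap_mono M.2.2⟩
      invFun m := ⟨_, isGradedMaximal_gradedExtension m.2.1, (le_gradedExtension_iff hP).2 m.2.2⟩
      left_inv M := Subtype.ext M.2.1.gradedExtension_comap
      right_inv m := Subtype.ext (comap_gradedExtension m.1) }

end GradedExtension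

section Statements

variable {G : Type*} [AddGroup G] [DecidableEq G] {R : Type*} [CommRing R]
variable (𝒜 : G → AddSubgroup R) [GradedRing 𝒜]

theorem stmt_12 : IsGelfandGraded 𝒜 ↔
    ∀ P : Ideal ↥(𝒜 0), P.IsPrime → ∃! M : Ideal ↥(𝒜 0), M.IsMaximal ∧ P ≤ M := by
  constructor
  · intro H p hp
    simpa using (existsUnique_isGradedMaximal_le_iff (Ideal.gradedExtension_isHomogeneous p)).1
      (H _ (Ideal.isGradedPrime_gradedExtension hp))
  · intro H P hP
    exact (existsUnique_isGradedMaximal_le_iff hP.1).2 (H _ hP.isPrime_comap)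
end Statements
end

section
/- For a commutative ring R, the polynomial ring R[X] with its standard ℤ-grading is a Gelfand ℤ-graded ring if and only if R is a Gelfand ring. -/
section Poly

theorem existsUnique_congr_of_leftInverse {α β : Type*} {p : α → Prop} {q : β → Prop}
    (f : α → β) (g : β → α) (hf : ∀ a, p a → q (f a)) (hg : ∀ b, q b → p (g b))
    (hgf : ∀ a, p a → g (f a) = a) (hfg : ∀ b, q b → f (g b) = b) :
    (∃! a, p a) ↔ ∃! b, q b :=
  ⟨fun ⟨a, ha, hu⟩ => ⟨f a, hf a ha, fun b hb => by rw [← hfg b hb, hu _ (hg b hb)]⟩,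
    fun ⟨b, hb, hu⟩ => ⟨g b, hg b hb, fun a ha => by rw [← hgf a ha, hu _ (hf a ha)]⟩⟩

theorem isGradedPrime_iff {ι A : Type*} [AddCommGroup ι] [LinearOrder ι]
    [IsOrderedCancelAddMonoid ι] [CommRing A] {𝒜 : ι → AddSubgroup A}
    [GradedRing 𝒜] {P : Ideal A} :
    IsGradedPrime 𝒜 P ↔ P.IsHomogeneous 𝒜 ∧ P.IsPrime := by
  refine ⟨fun ⟨hP, hne, hmem⟩ => ⟨hP, ?_⟩, fun ⟨hP, hprime⟩ => ?_⟩
  · exact hP.isPrime_iff.2 ⟨hne, fun hx hy hxy => hmem _ _ hx hy hxy⟩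
  · exact ⟨hP, hprime.ne_top, fun _ _ _ _ hab => hprime.mem_or_mem hab⟩

namespace Polynomial

variable {R : Type*} [CommRing R]

theorem comap_C_comap_constantCoeff (I : Ideal R) :
    (I.comap constantCoeff).comap (C : R →+* R[X]) = I := by
  ext r
  simp

variable {𝒜 : ℤ → AddSubgroup R[X]} [GradedRing 𝒜]
  (h𝒜 : ∀ (n : ℕ) (r : R), C r * X ^ n ∈ 𝒜 n)
include h𝒜

theorem coeff_decompose (f : R[X]) (i : ℤ) (n : ℕ) :
    (DirectSum.decompose 𝒜 f i : R[X]).coeff n = if i = n then f.coeff n else 0 := by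
  induction f using Polynomial.induction_on' with
  | add f g hf hg =>
    rw [DirectSum.decompose_add, DirectSum.add_apply, AddSubgroup.coe_add, coeff_add, hf, hg]
    split_ifs <;> simp
  | monomial m r =>
    have hmem : monomial m r ∈ 𝒜 m := C_mul_X_pow_eq_monomial (a := r) ▸ h𝒜 m r
    by_cases him : i = m
    · subst him
      rw [DirectSum.decompose_of_mem_same 𝒜 hmem, coeff_monomial]
      split_ifs <;> simp_all
    · rw [DirectSum.decompose_of_mem_ne 𝒜 hmem (Ne.symm him), coeff_monomial]
      split_ifs <;> simp_all

theorem decompose_zero_eq_C (f : R[X]) :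
    (DirectSum.decompose 𝒜 f 0 : R[X]) = C (f.coeff 0) := by
  ext n
  rw [coeff_decompose h𝒜, coeff_C]
  by_cases hn : n = 0 <;> simp [hn, eq_comm]

theorem le_comap_constantCoeff_comap_C {J : Ideal R[X]} (hJ : J.IsHomogeneous 𝒜) :
    J ≤ (J.comap C).comap constantCoeff :=
  fun f hf => show C (f.coeff 0) ∈ J from decompose_zero_eq_C h𝒜 f ▸ hJ 0 hf

theorem isHomogeneous_comap_constantCoeff (I : Ideal R) :
    (I.comap constantCoeff).IsHomogeneous 𝒜 := by
  intro i _ hf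
  simp only [Ideal.mem_comap, constantCoeff_apply, coeff_decompose h𝒜] at hf ⊢
  split_ifs
  · exact hf
  · exact I.zero_mem

theorem isGradedMaximal_comap_constantCoeff {m : Ideal R} (hm : m.IsMaximal) :
    IsGradedMaximal 𝒜 (m.comap constantCoeff) := by
  refine ⟨isHomogeneous_comap_constantCoeff h𝒜 m, Ideal.comap_ne_top _ hm.ne_top,
    fun J hJ hmJ hJne => le_antisymm ?_ hmJ⟩
  have hJC : J.comap C = m :=
    (hm.eq_of_le (Ideal.comap_ne_top _ hJne)
      (comap_C_comap_constantCoeff m ▸ Ideal.comap_mono hmJ)).symm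
  exact hJC ▸ le_comap_constantCoeff_comap_C h𝒜 hJ

theorem IsGradedMaximal.comap_constantCoeff_comap_C {M : Ideal R[X]}
    (hM : IsGradedMaximal 𝒜 M) : (M.comap C).comap constantCoeff = M :=
  hM.2.2 _ (isHomogeneous_comap_constantCoeff h𝒜 _) (le_comap_constantCoeff_comap_C h𝒜 hM.1)
    (Ideal.comap_ne_top _ (Ideal.comap_ne_top _ hM.2.1))

theorem IsGradedMaximal.isMaximal_comap_C {M : Ideal R[X]} (hM : IsGradedMaximal 𝒜 M) :
    (M.comap C).IsMaximal := by
  refine Ideal.isMaximal_def.2 ⟨Ideal.comap_ne_top _ hM.2.1, fun m hMm => ?_⟩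
  by_contra hm
  have hM_le : M ≤ m.comap constantCoeff :=
    IsGradedMaximal.comap_constantCoeff_comap_C h𝒜 hM ▸ Ideal.comap_mono hMm.le
  have := hM.2.2 _ (isHomogeneous_comap_constantCoeff h𝒜 m) hM_le (Ideal.comap_ne_top _ hm)
  exact hMm.ne (by rw [← this, comap_C_comap_constantCoeff])

theorem existsUnique_isGradedMaximal_le_iff {P : Ideal R[X]} (hP : P.IsHomogeneous 𝒜) :
    (∃! M, IsGradedMaximal 𝒜 M ∧ P ≤ M) ↔ ∃! m : Ideal R, m.IsMaximal ∧ P.comap C ≤ m := by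
  refine existsUnique_congr_of_leftInverse (Ideal.comap C) (Ideal.comap constantCoeff)
    (fun M hM => ⟨IsGradedMaximal.isMaximal_comap_C h𝒜 hM.1, Ideal.comap_mono hM.2⟩)
    (fun m ⟨hm, hPm⟩ => ⟨isGradedMaximal_comap_constantCoeff h𝒜 hm,
      (le_comap_constantCoeff_comap_C h𝒜 hP).trans (Ideal.comap_mono hPm)⟩)
    (fun M hM => IsGradedMaximal.comap_constantCoeff_comap_C h𝒜 hM.1)
    (fun m _ => comap_C_comap_constantCoeff m)

end Polynomial

open Polynomial in
theorem stmt_13_general {R : Type*} [CommRing R]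
    (𝒜 : ℤ → AddSubgroup (Polynomial R)) [GradedRing 𝒜]
    (hnat : ∀ (n : ℕ) (p : Polynomial R),
      p ∈ 𝒜 (n : ℤ) ↔ ∃ r : R, p = Polynomial.C r * Polynomial.X ^ n) :
    IsGelfandGraded 𝒜 ↔
      ∀ P : Ideal R, P.IsPrime → ∃! M : Ideal R, M.IsMaximal ∧ P ≤ M := by
  have h𝒜 : ∀ (n : ℕ) (r : R), C r * X ^ n ∈ 𝒜 n := fun n r => (hnat n _).2 ⟨r, rfl⟩
  constructor
  · intro hG p hp
    have hP : IsGradedPrime 𝒜 (p.comap constantCoeff) :=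
      isGradedPrime_iff.2 ⟨isHomogeneous_comap_constantCoeff h𝒜 p, Ideal.comap_isPrime _ _⟩
    simpa only [comap_C_comap_constantCoeff] using
      (existsUnique_isGradedMaximal_le_iff h𝒜 hP.1).1 (hG _ hP)
  · intro h P hP
    have := (isGradedPrime_iff.1 hP).2
    exact (existsUnique_isGradedMaximal_le_iff h𝒜 hP.1).2 (h _ (Ideal.comap_isPrime C P))

theorem stmt_13 {R : Type*} [CommRing R]
    (𝒜 : ℤ → AddSubgroup (Polynomial R)) [GradedRing 𝒜]
    (hnat : ∀ (n : ℕ) (p : Polynomial R),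
      p ∈ 𝒜 (n : ℤ) ↔ ∃ r : R, p = Polynomial.C r * Polynomial.X ^ n)
    (hneg : ∀ n : ℤ, n < 0 → 𝒜 n = ⊥) :
    IsGelfandGraded 𝒜 ↔
      ∀ P : Ideal R, P.IsPrime → ∃! M : Ideal R, M.IsMaximal ∧ P ≤ M :=
  stmt_13_general 𝒜 hnat

end Poly
end

section
/- A G-graded commutative ring R is a pm⁺ graded ring if and only if for any two homogeneous prime ideals P, Q which are not comparable under inclusion, there exist homogeneous elements r, r' ∈ h(R) with rr' = 0, r ∉ P and r' ∉ Q. -/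
/-! If no homogeneous `r ∉ P`, `r' ∉ Q` have `r * r' = 0`, the products of such elements form a
multiplicative set avoiding `0`. An ordinary prime avoiding it has a homogeneous core, which is a
homogeneous prime (primality is only tested on homogeneous elements, so no order on `G` is
needed) contained in both `P` and `Q`; in a pm⁺ ring this forces `P` and `Q` to be
comparable. Conversely, `r * r' = 0` cannot hold in a homogeneous prime lying below both `P` and
`Q`, so two homogeneous primes over a common one must be comparable. -/

section Statements

variable {G : Type*} [AddGroup G] [DecidableEq G] {R : Type*} [CommRing R]
variable (𝒜 : G → AddSubgroup R) [GradedRing 𝒜]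

namespace IsGradedPrime

variable {𝒜} {P : Ideal R}

def homogeneousCompl (hP : IsGradedPrime 𝒜 P) : Submonoid R where
  carrier := {r | SetLike.IsHomogeneousElem 𝒜 r ∧ r ∉ P}
  one_mem' := ⟨SetLike.isHomogeneousElem_one 𝒜, (Ideal.ne_top_iff_one P).1 hP.2.1⟩
  mul_mem' := fun ⟨ha, haP⟩ ⟨hb, hbP⟩ =>
    ⟨ha.mul hb, fun hab => (hP.2.2 _ _ ha hb hab).elim haP hbP⟩

theorem toIdeal_homogeneousCore_le_of_disjoint (hP : IsGradedPrime 𝒜 P) {p : Ideal R}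
    (hp : Disjoint (p : Set R) hP.homogeneousCompl) : (p.homogeneousCore 𝒜).toIdeal ≤ P := by
  refine Ideal.span_le.2 ?_
  rintro _ ⟨⟨x, hx⟩, hxp, rfl⟩
  by_contra hxP
  exact Set.disjoint_left.1 hp hxp ⟨hx, hxP⟩

end IsGradedPrime

theorem Ideal.IsPrime.isGradedPrime_homogeneousCore {p : Ideal R} (hp : p.IsPrime) :
    IsGradedPrime 𝒜 (p.homogeneousCore 𝒜).toIdeal := by
  refine ⟨(p.homogeneousCore 𝒜).isHomogeneous, ?_, fun a b ha hb hab => ?_⟩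
  · exact ne_top_of_le_ne_top hp.ne_top (p.toIdeal_homogeneousCore_le 𝒜)
  · exact (hp.mem_or_mem (p.toIdeal_homogeneousCore_le 𝒜 hab)).imp
      (Ideal.mem_homogeneousCore_of_homogeneous_of_mem ha)
      (Ideal.mem_homogeneousCore_of_homogeneous_of_mem hb)

theorem exists_isGradedPrime_le_le_iff {P Q : Ideal R} (hP : IsGradedPrime 𝒜 P)
    (hQ : IsGradedPrime 𝒜 Q) :
    (∃ I, IsGradedPrime 𝒜 I ∧ I ≤ P ∧ I ≤ Q) ↔
      ¬ ∃ r r' : R, SetLike.IsHomogeneousElem 𝒜 r ∧ SetLike.IsHomogeneousElem 𝒜 r' ∧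
        r * r' = 0 ∧ r ∉ P ∧ r' ∉ Q := by
  constructor
  · rintro ⟨I, hI, hIP, hIQ⟩ ⟨r, r', hr, hr', hrr', hrP, hr'Q⟩
    rcases hI.2.2 r r' hr hr' (hrr' ▸ I.zero_mem) with h | h
    exacts [hrP (hIP h), hr'Q (hIQ h)]
  · intro hno
    have hzero : Disjoint ((⊥ : Ideal R) : Set R)
        ((hP.homogeneousCompl ⊔ hQ.homogeneousCompl : Submonoid R) : Set R) := by
      rw [Submodule.bot_coe, Set.disjoint_singleton_left]
      intro h0
      obtain ⟨r, ⟨hr, hrP⟩, r', ⟨hr', hr'Q⟩, hrr'⟩ := Submonoid.mem_sup.1 h0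
      exact hno ⟨r, r', hr, hr', hrr', hrP, hr'Q⟩
    obtain ⟨p, hp, -, hpS⟩ := Ideal.exists_le_prime_disjoint ⊥ _ hzero
    exact ⟨_, hp.isGradedPrime_homogeneousCore 𝒜,
      hP.toIdeal_homogeneousCore_le_of_disjoint (hpS.mono_right (SetLike.coe_mono le_sup_left)),
      hQ.toIdeal_homogeneousCore_le_of_disjoint (hpS.mono_right (SetLike.coe_mono le_sup_right))⟩

theorem stmt_15 : IsPMPlusGraded 𝒜 ↔
    ∀ P Q : Ideal R, IsGradedPrime 𝒜 P → IsGradedPrime 𝒜 Q → ¬ P ≤ Q → ¬ Q ≤ P →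
      ∃ r r' : R, SetLike.IsHomogeneousElem 𝒜 r ∧ SetLike.IsHomogeneousElem 𝒜 r' ∧
        r * r' = 0 ∧ r ∉ P ∧ r' ∉ Q := by
  constructor
  · intro hpm P Q hP hQ hPQ hQP
    by_contra hno
    obtain ⟨I, hI, hIP, hIQ⟩ := (exists_isGradedPrime_le_le_iff 𝒜 hP hQ).2 hno
    exact (hpm I P Q hI hP hQ hIP hIQ).elim hPQ hQP
  · intro hsep P Q Q' hP hQ hQ' hPQ hPQ'
    by_contra hcomp
    obtain ⟨hQQ', hQ'Q⟩ := not_or.1 hcomp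
    exact (exists_isGradedPrime_le_le_iff 𝒜 hQ hQ').1 ⟨P, hP, hPQ, hPQ'⟩
      (hsep Q Q' hQ hQ' hQQ' hQ'Q)
end Statements
end

section
/- A G-graded commutative ring R is a pm⁺ graded ring if and only if for every minimal homogeneous prime ideal m of R, the homogeneous prime ideals of R/m are linearly ordered under inclusion. -/
/-!
Graded primes of `R ⧸ m` correspond, under `comap` and `map` along the quotient map, to the
graded primes of `R` containing `m`, and this correspondence preserves and reflects inclusion.
So the chain condition in `R ⧸ m` is the chain condition above `m` in `R`. Conversely, every
graded prime `P` contains a minimal one `m` (Zorn: the intersection of a chain of graded primes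
is a graded prime), and the graded primes containing `P` all contain `m`.
-/

open DirectSum

section QuotientGrading

variable {G R : Type*} [CommRing R] (𝒜 : G → AddSubgroup R) (m : Ideal R)

def quotientGrading (g : G) : AddSubgroup (R ⧸ m) :=
  (𝒜 g).map (Ideal.Quotient.mk m : R →+* R ⧸ m).toAddMonoidHom

theorem mk_mem_quotientGrading {a : R} {g : G} (ha : a ∈ 𝒜 g) :
    Ideal.Quotient.mk m a ∈ quotientGrading 𝒜 m g :=
  AddSubgroup.mem_map_of_mem _ ha

theorem exists_mk_eq_of_mem_quotientGrading {x : R ⧸ m} {g : G}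
    (hx : x ∈ quotientGrading 𝒜 m g) : ∃ a ∈ 𝒜 g, Ideal.Quotient.mk m a = x :=
  hx

instance [AddMonoid G] [SetLike.GradedMonoid 𝒜] :
    SetLike.GradedMonoid (quotientGrading 𝒜 m) where
  one_mem := by simpa using mk_mem_quotientGrading 𝒜 m SetLike.GradedOne.one_mem
  mul_mem := by
    rintro i j _ _ ⟨a, ha, rfl⟩ ⟨b, hb, rfl⟩
    simpa using mk_mem_quotientGrading 𝒜 m (SetLike.mul_mem_graded ha hb)

variable [AddMonoid G] [DecidableEq G] [GradedRing 𝒜]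

noncomputable def quotientDecompose : R →+ ⨁ g, quotientGrading 𝒜 m g :=
  (DirectSum.map fun g ↦
      (Ideal.Quotient.mk m : R →+* R ⧸ m).toAddMonoidHom.addSubgroupMap (𝒜 g)).comp
    (decomposeAddEquiv 𝒜).toAddMonoidHom

@[simp]
theorem coe_quotientDecompose_apply (a : R) (i : G) :
    (quotientDecompose 𝒜 m a i : R ⧸ m) = Ideal.Quotient.mk m (decompose 𝒜 a i) :=
  rfl

theorem coeAddMonoidHom_quotientDecompose (a : R) :
    DirectSum.coeAddMonoidHom (quotientGrading 𝒜 m) (quotientDecompose 𝒜 m a) =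
      Ideal.Quotient.mk m a := by
  induction a using DirectSum.Decomposition.inductionOn 𝒜 with
  | zero => simp
  | homogeneous x =>
    change DirectSum.coeAddMonoidHom _ (DirectSum.map _ (decompose 𝒜 (x : R))) = _
    rw [decompose_coe]
    exact (congrArg _ (map_of _ _ _)).trans (DirectSum.coeAddMonoidHom_of _ _ _)
  | add a b ha hb => simp only [map_add, ha, hb]

theorem quotientDecompose_surjective : Function.Surjective (quotientDecompose 𝒜 m) :=
  ((DirectSum.map_surjective _).2 fun _ ↦ AddMonoidHom.addSubgroupMap_surjective _ _).comp
    (decomposeAddEquiv 𝒜).surjective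

theorem quotientDecompose_eq_zero (hm : m.IsHomogeneous 𝒜) {a : R} (ha : a ∈ m) :
    quotientDecompose 𝒜 m a = 0 := by
  ext i
  simpa using Ideal.Quotient.eq_zero_iff_mem.2 (hm i ha)

theorem isInternal_quotientGrading (hm : m.IsHomogeneous 𝒜) :
    IsInternal (quotientGrading 𝒜 m) := by
  refine ⟨(injective_iff_map_eq_zero _).2 fun y hy ↦ ?_, fun x ↦ ?_⟩
  · obtain ⟨a, rfl⟩ := quotientDecompose_surjective 𝒜 m y
    rw [coeAddMonoidHom_quotientDecompose, Ideal.Quotient.eq_zero_iff_mem] at hy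
    exact quotientDecompose_eq_zero 𝒜 m hm hy
  · obtain ⟨a, rfl⟩ := Ideal.Quotient.mk_surjective x
    exact ⟨_, coeAddMonoidHom_quotientDecompose 𝒜 m a⟩

noncomputable abbrev quotientGradedRing (hm : m.IsHomogeneous 𝒜) :
    GradedRing (quotientGrading 𝒜 m) :=
  { (isInternal_quotientGrading 𝒜 m hm).chooseDecomposition with }

theorem decompose_mk [Decomposition (quotientGrading 𝒜 m)] (a : R) :
    decompose (quotientGrading 𝒜 m) (Ideal.Quotient.mk m a) = quotientDecompose 𝒜 m a :=
  (Equiv.eq_symm_apply _).1 (coeAddMonoidHom_quotientDecompose 𝒜 m a).symm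

end QuotientGrading

section GradedPrime

variable {G R : Type*} [AddGroup G] [DecidableEq G] [CommRing R]
variable {𝒜 : G → AddSubgroup R} [GradedRing 𝒜] {m : Ideal R}

theorem IsGradedPrime.comap_mk [GradedRing (quotientGrading 𝒜 m)] {P : Ideal (R ⧸ m)}
    (hP : IsGradedPrime (quotientGrading 𝒜 m) P) :
    IsGradedPrime 𝒜 (P.comap (Ideal.Quotient.mk m)) := by
  refine ⟨fun i r hr ↦ ?_, Ideal.comap_ne_top _ hP.2.1, fun a b ⟨i, ha⟩ ⟨j, hb⟩ hab ↦ ?_⟩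
  · have := hP.1 i hr
    rwa [decompose_mk, coe_quotientDecompose_apply] at this
  · exact hP.2.2 _ _ ⟨i, mk_mem_quotientGrading 𝒜 m ha⟩ ⟨j, mk_mem_quotientGrading 𝒜 m hb⟩
      (by simpa using hab)

theorem IsGradedPrime.map_mk [GradedRing (quotientGrading 𝒜 m)] {Q : Ideal R}
    (hQ : IsGradedPrime 𝒜 Q) (hmQ : m ≤ Q) :
    IsGradedPrime (quotientGrading 𝒜 m) (Q.map (Ideal.Quotient.mk m)) := by
  refine ⟨fun i x hx ↦ ?_, fun htop ↦ ?_, ?_⟩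
  · obtain ⟨a, ha, rfl⟩ :=
      (Ideal.mem_map_iff_of_surjective _ Ideal.Quotient.mk_surjective).1 hx
    rw [decompose_mk, coe_quotientDecompose_apply]
    exact Ideal.mem_map_of_mem _ (hQ.1 i ha)
  · exact hQ.2.1 (by rw [← Ideal.comap_map_mk hmQ, htop, Ideal.comap_top])
  · rintro _ _ ⟨i, hx⟩ ⟨j, hy⟩ hab
    obtain ⟨a, ha, rfl⟩ := exists_mk_eq_of_mem_quotientGrading 𝒜 m hx
    obtain ⟨b, hb, rfl⟩ := exists_mk_eq_of_mem_quotientGrading 𝒜 m hy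
    rw [← map_mul, ← Ideal.mem_comap, Ideal.comap_map_mk hmQ] at hab
    exact (hQ.2.2 a b ⟨i, ha⟩ ⟨j, hb⟩ hab).imp (Ideal.mem_map_of_mem _) (Ideal.mem_map_of_mem _)

theorem IsGradedPrime.sInf_of_isChain {c : Set (Ideal R)} (hc : ∀ J ∈ c, IsGradedPrime 𝒜 J)
    (hchain : IsChain (· ≤ ·) c) (hne : c.Nonempty) : IsGradedPrime 𝒜 (sInf c) := by
  refine ⟨Ideal.IsHomogeneous.sInf fun J hJ ↦ (hc J hJ).1, fun htop ↦ ?_,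
    fun a b ha hb hab ↦ ?_⟩
  · obtain ⟨J, hJ⟩ := hne
    exact (hc J hJ).2.1 (top_le_iff.1 (htop ▸ sInf_le hJ))
  · by_contra! h
    simp only [Submodule.mem_sInf, not_forall] at h
    obtain ⟨⟨J₁, hJ₁, haJ₁⟩, ⟨J₂, hJ₂, hbJ₂⟩⟩ := h
    -- the smaller of `J₁` and `J₂` contains neither `a` nor `b`
    rcases hchain.total hJ₁ hJ₂ with h | h
    · exact ((hc J₁ hJ₁).2.2 a b ha hb (Submodule.mem_sInf.1 hab J₁ hJ₁)).elim haJ₁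
        (hbJ₂ <| h ·)
    · exact ((hc J₂ hJ₂).2.2 a b ha hb (Submodule.mem_sInf.1 hab J₂ hJ₂)).elim
        (haJ₁ <| h ·) hbJ₂

theorem exists_minimal_isGradedPrime_le {P : Ideal R} (hP : IsGradedPrime 𝒜 P) :
    ∃ m ≤ P, Minimal (IsGradedPrime 𝒜) m := by
  obtain ⟨m, hPm, hm⟩ := zorn_le_nonempty₀ (α := (Ideal R)ᵒᵈ)
    {q | IsGradedPrime 𝒜 (OrderDual.ofDual q)}
    (fun c hc hchain y hy ↦ ⟨OrderDual.toDual (sInf (OrderDual.ofDual '' c)),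
      IsGradedPrime.sInf_of_isChain (by rintro _ ⟨J, hJ, rfl⟩; exact hc hJ)
        (hchain.symm.image_of_map_rel _ _ _ fun _ _ ↦ id) (Set.Nonempty.image _ ⟨y, hy⟩),
      fun z hz ↦ show sInf _ ≤ OrderDual.ofDual z from sInf_le ⟨z, hz, rfl⟩⟩)
    (OrderDual.toDual P) hP
  exact ⟨OrderDual.ofDual m, hPm, (maximal_toDual (P := IsGradedPrime 𝒜)).1 hm⟩

end GradedPrime

section Statements

variable {G : Type*} [AddGroup G] [DecidableEq G] {R : Type*} [CommRing R]
variable (𝒜 : G → AddSubgroup R) [GradedRing 𝒜]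

theorem stmt_16 : IsPMPlusGraded 𝒜 ↔
    ∀ m : Ideal R, IsGradedPrime 𝒜 m →
      (∀ p : Ideal R, IsGradedPrime 𝒜 p → p ≤ m → p = m) →
      ∀ (ℬ : G → AddSubgroup (R ⧸ m)) [GradedRing ℬ],
        (∀ g : G, ℬ g = (𝒜 g).map (Ideal.Quotient.mk m : R →+* R ⧸ m).toAddMonoidHom) →
        ∀ P Q : Ideal (R ⧸ m), IsGradedPrime ℬ P → IsGradedPrime ℬ Q → P ≤ Q ∨ Q ≤ P := by
  constructor
  · intro hpm m hm _ ℬ _ hℬ P Q hP hQ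
    obtain rfl : ℬ = quotientGrading 𝒜 m := funext hℬ
    have hm_le : ∀ P : Ideal (R ⧸ m), m ≤ P.comap (Ideal.Quotient.mk m) := fun P ↦
      Ideal.mk_ker.symm.trans_le (Ideal.ker_le_comap _)
    simpa only [Ideal.comap_le_comap_iff_of_surjective _ Ideal.Quotient.mk_surjective] using
      hpm m _ _ hm hP.comap_mk hQ.comap_mk (hm_le P) (hm_le Q)
  · intro H P Q Q' hP hQ hQ' hPQ hPQ'
    obtain ⟨m, hmP, hm⟩ := exists_minimal_isGradedPrime_le hP
    let := quotientGradedRing 𝒜 m hm.1.1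
    have hmQ : m ≤ Q := hmP.trans hPQ
    have hmQ' : m ≤ Q' := hmP.trans hPQ'
    rw [← Ideal.comap_map_mk hmQ, ← Ideal.comap_map_mk hmQ']
    exact (H m hm.1 (fun _ ↦ hm.eq_of_le) (quotientGrading 𝒜 m) (fun _ ↦ rfl) _ _
      (hQ.map_mk hmQ) (hQ'.map_mk hmQ')).imp Ideal.comap_mono Ideal.comap_mono

end Statements
end

section
/- A G-graded commutative ring R is a pm⁺ graded ring if and only if for every homogeneous prime ideal P, the set C(P) = {Q ∈ GSpec(R) : P ⊆ Q or Q ⊆ P} of homogeneous primes comparable with P is a Zariski closed subset of GSpec(R). -/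
section HomogeneousIdeal

variable {ι A σ : Type*} [Semiring A] [SetLike σ A] [AddSubmonoidClass σ A] {𝒜 : ι → σ}
  [DecidableEq ι] [AddMonoid ι] [GradedRing 𝒜]

theorem Ideal.IsHomogeneous.le_of_forall_isHomogeneousElem {P Q : Ideal A}
    (hP : P.IsHomogeneous 𝒜) (h : ∀ r ∈ P, SetLike.IsHomogeneousElem 𝒜 r → r ∈ Q) : P ≤ Q := by
  rw [← hP.toIdeal_homogeneousCore_eq_self]
  exact Ideal.span_le.2 fun _ ⟨⟨r, hr⟩, hrP, hr_eq⟩ => hr_eq ▸ h r hrP hr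

end HomogeneousIdeal

section Statements

variable {G : Type*} [AddGroup G] [DecidableEq G] {R : Type*} [CommRing R]
variable (𝒜 : G → AddSubgroup R) [GradedRing 𝒜]

section Lemmas

variable {𝒜}

theorem Ideal.IsPrime.isGradedPrime_homogeneousCore_s17 {M : Ideal R} (hM : M.IsPrime) :
    IsGradedPrime 𝒜 (M.homogeneousCore 𝒜).toIdeal := by
  have hle := M.toIdeal_homogeneousCore_le 𝒜
  refine ⟨(M.homogeneousCore 𝒜).isHomogeneous, fun h => hM.ne_top (top_le_iff.1 (h ▸ hle)), ?_⟩
  intro a b ha hb hab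
  exact (hM.mem_or_mem (hle hab)).imp (Ideal.mem_homogeneousCore_of_homogeneous_of_mem ha)
    (Ideal.mem_homogeneousCore_of_homogeneous_of_mem hb)

theorem exists_isGradedPrime_forall_notMem (S : Submonoid R) (h0 : (0 : R) ∉ S) :
    ∃ C : GSpec 𝒜, ∀ s ∈ S, SetLike.IsHomogeneousElem 𝒜 s → s ∉ C.1 := by
  obtain ⟨M, hM, -, hMS⟩ := Ideal.exists_le_prime_disjoint ⊥ S <|
    Set.disjoint_left.2 fun x hx hxS => h0 (Ideal.mem_bot.1 hx ▸ hxS)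
  exact ⟨⟨_, hM.isGradedPrime_homogeneousCore_s17⟩, fun s hs _ hsC =>
    Set.disjoint_left.1 hMS (M.toIdeal_homogeneousCore_le 𝒜 hsC) hs⟩

def IsGradedPrime.homogeneousCompl_s17 {P : Ideal R} (hP : IsGradedPrime 𝒜 P) : Submonoid R where
  carrier := {r | SetLike.IsHomogeneousElem 𝒜 r ∧ r ∉ P}
  one_mem' := ⟨SetLike.isHomogeneousElem_one 𝒜, fun h => hP.2.1 ((Ideal.eq_top_iff_one P).2 h)⟩
  mul_mem' := fun ⟨ha, haP⟩ ⟨hb, hbP⟩ => ⟨ha.mul hb, fun h => (hP.2.2 _ _ ha hb h).elim haP hbP⟩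

def GSpec.homogeneousKernelBelow (P : GSpec 𝒜) : Set R :=
  {r | SetLike.IsHomogeneousElem 𝒜 r ∧ ∀ Q : GSpec 𝒜, Q.1 ≤ P.1 → r ∈ Q.1}

theorem GSpec.exists_le_le_of_homogeneousKernelBelow_subset {P Q : GSpec 𝒜}
    (h : P.homogeneousKernelBelow ⊆ Q.1) : ∃ C : GSpec 𝒜, C.1 ≤ P.1 ∧ C.1 ≤ Q.1 := by
  by_cases h0 : (0 : R) ∈ P.2.homogeneousCompl_s17 ⊔ Q.2.homogeneousCompl_s17
  · obtain ⟨a, ⟨ha, haP⟩, b, ⟨hb, hbQ⟩, hab⟩ := Submonoid.mem_sup.1 h0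
    refine absurd (h ⟨hb, fun Q' hQ'P => ?_⟩) hbQ
    exact (Q'.2.2.2 a b ha hb (hab ▸ Q'.1.zero_mem)).resolve_left fun haQ' => haP (hQ'P haQ')
  · obtain ⟨C, hC⟩ := exists_isGradedPrime_forall_notMem (𝒜 := 𝒜) _ h0
    refine ⟨C, C.2.1.le_of_forall_isHomogeneousElem fun r hrC hr => ?_,
      C.2.1.le_of_forall_isHomogeneousElem fun r hrC hr => ?_⟩
    · by_contra hrP
      exact hC r (Submonoid.mem_sup_left ⟨hr, hrP⟩) hr hrC
    · by_contra hrQ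
      exact hC r (Submonoid.mem_sup_right ⟨hr, hrQ⟩) hr hrC

theorem GSpec.isClosed_setOf_mem {r : R} (hr : SetLike.IsHomogeneousElem 𝒜 r) :
    IsClosed {Q : GSpec 𝒜 | r ∈ Q.1} :=
  isOpen_compl_iff.1 (TopologicalSpace.GenerateOpen.basic _ ⟨r, hr, rfl⟩)

theorem GSpec.specializes_of_le {P Q : GSpec 𝒜} (h : P.1 ≤ Q.1) : P ⤳ Q := by
  change nhds P ≤ nhds Q
  rw [TopologicalSpace.nhds_generateFrom, TopologicalSpace.nhds_generateFrom]
  refine le_iInf₂ fun s ⟨hQs, r, hr, hs⟩ => iInf₂_le s ⟨?_, r, hr, hs⟩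
  subst hs
  exact fun hrP => hQs (h hrP)

theorem IsPMPlusGraded.setOf_comparable_eq_biInter (hpm : IsPMPlusGraded 𝒜) (P : GSpec 𝒜) :
    {Q : GSpec 𝒜 | P.1 ≤ Q.1 ∨ Q.1 ≤ P.1} =
      ⋂ r ∈ P.homogeneousKernelBelow, {Q : GSpec 𝒜 | r ∈ Q.1} := by
  ext Q
  simp only [Set.mem_iInter]
  refine ⟨?_, fun hQ => ?_⟩
  · rintro (hPQ | hQP) r ⟨-, hr⟩
    exacts [hPQ (hr P le_rfl), hr Q hQP]
  · obtain ⟨C, hCP, hCQ⟩ := GSpec.exists_le_le_of_homogeneousKernelBelow_subset hQ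
    exact hpm C.1 P.1 Q.1 C.2 P.2 Q.2 hCP hCQ

end Lemmas

theorem stmt_17 : IsPMPlusGraded 𝒜 ↔
    ∀ P : GSpec 𝒜, IsClosed { Q : GSpec 𝒜 | P.1 ≤ Q.1 ∨ Q.1 ≤ P.1 } := by
  refine ⟨fun hpm P => ?_, fun h P Q Q' hP hQ hQ' hPQ hPQ' => ?_⟩
  · rw [hpm.setOf_comparable_eq_biInter P]
    exact isClosed_biInter fun r hr => GSpec.isClosed_setOf_mem hr.1
  · exact (GSpec.specializes_of_le (P := ⟨P, hP⟩) (Q := ⟨Q', hQ'⟩) hPQ').mem_closed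
      (h ⟨Q, hQ⟩) (Or.inr hPQ)

end Statements
end
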